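/- arXiv:dg-ga/9706011 — 2 statements merged into one kernel-verified Lean document; each statement's English description precedes it below -/
import Mathlib

section
/- Let Ω be an open convex domain in ℝ³ and let L be a (possibly infinite) collection of complete affine lines whose union C is closed in ℝ³, and set Ω' = Ω \ C. Let T be a tetrahedron in ℝ³ with faces F₁, F₂, F₃, F₄ such that T° ∪ F₂ ∪ F₃ ∪ F₄ ⊆ Ω'. Then T ⊆ Ω'. -/
/-
Coordinates are barycentric with respect to the vertices of `T`; the face `F 0` is where the
coordinate of `v 0` vanishes. Orient a line `ℓ` meeting `T` so that this coordinate does not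
decrease along it. At the last point of `ℓ` in `T` some other barycentric coordinate must vanish,
for otherwise `ℓ` could be continued inside `T`. Hence every complete line meeting `T` meets
`F 1 ∪ F 2 ∪ F 3`, which `C` avoids. The vertices lie in `F 1 ∪ F 2 ⊆ Ω`, so `T ⊆ Ω` by convexity.
-/

open Set Filter Topology

theorem isCompact_setOf_add_smul_mem {E : Type*} [AddCommGroup E] [Module ℝ E]
    [TopologicalSpace E] [IsTopologicalAddGroup E] [ContinuousSMul ℝ E] [T2Space E] {K : Set E}
    (hK : IsCompact K)
    (q : E) {e : E} (he : e ≠ 0) : IsCompact {t : ℝ | q + t • e ∈ K} :=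
  ((Homeomorph.addLeft q).isClosedEmbedding.comp
    (isClosedEmbedding_smul_left he)).isCompact_preimage hK

namespace AffineBasis

variable {ι : Type*}

theorem mem_convexHull_image_ne_of_coord_eq_zero {R E : Type*} [Field R] [LinearOrder R]
    [IsStrictOrderedRing R] [AddCommGroup E] [Module R E] [Fintype ι] (b : AffineBasis ι R E)
    {x : E} (hx : x ∈ convexHull R (range b)) {j : ι} (hj : b.coord j x = 0) :
    x ∈ convexHull R (b '' {k | k ≠ j}) := by
  classical
  rw [b.convexHull_eq_nonneg_coord] at hx
  have hw : (↑(Finset.univ.erase j) : Set ι).indicator (b.coord · x) = (b.coord · x) := by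
    ext k
    by_cases hk : k = j <;> simp [hk, hj]
  have hcomb : (Finset.univ.erase j).affineCombination R b (b.coord · x) = x := by
    rw [Finset.affineCombination_indicator_subset _ _ (Finset.subset_univ _), hw,
      b.affineCombination_coord_eq_self]
  have hsum : ∑ k ∈ Finset.univ.erase j, b.coord k x = 1 := by
    rw [Finset.sum_erase (f := (b.coord · x)) _ hj, b.sum_coord_apply_eq_one]
  rw [← hcomb, affineCombination_eq_centerMass hsum]
  exact (Finset.univ.erase j).centerMass_mem_convexHull (fun k _ => hx k)
    (by rw [hsum]; exact one_pos) fun k hk => ⟨k, Finset.ne_of_mem_erase hk, rfl⟩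

variable {E : Type*} [NormedAddCommGroup E] [NormedSpace ℝ E]

theorem eventually_add_smul_mem_convexHull [Finite ι] [FiniteDimensional ℝ E]
    (b : AffineBasis ι ℝ E) {y e : E} {i : ι} (hy : y ∈ convexHull ℝ (range b))
    (hpos : ∀ j ≠ i, 0 < b.coord j y) (he : 0 ≤ (b.coord i).linear e) :
    ∀ᶠ u in 𝓝[>] (0 : ℝ), y + u • e ∈ convexHull ℝ (range b) := by
  rw [b.convexHull_eq_nonneg_coord] at hy ⊢
  have hcoord (j : ι) (u : ℝ) :
      b.coord j (y + u • e) = b.coord j y + u * (b.coord j).linear e := by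
    rw [add_comm, ← vadd_eq_add, AffineMap.map_vadd, map_smul, vadd_eq_add, smul_eq_mul, add_comm]
  have hcont (j : ι) : Continuous fun u : ℝ => b.coord j (y + u • e) := by
    simp only [hcoord]; fun_prop
  refine Filter.eventually_all.2 fun j => ?_
  by_cases hj : j = i
  · subst hj
    filter_upwards [self_mem_nhdsWithin] with u (hu : 0 < u)
    rw [hcoord]
    exact add_nonneg (hy j) (mul_nonneg hu.le he)
  · have : ∀ᶠ u in 𝓝 (0 : ℝ), 0 < b.coord j (y + u • e) :=
      continuousAt_const.eventually_lt (hcont j).continuousAt (by simpa using hpos j hj)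
    exact (this.filter_mono nhdsWithin_le_nhds).mono fun u hu => hu.le

theorem exists_add_smul_mem_convexHull_image_ne [Fintype ι] [FiniteDimensional ℝ E]
    (b : AffineBasis ι ℝ E) (i : ι) (q : E) {e : E} (he : e ≠ 0) {t₀ : ℝ}
    (ht₀ : q + t₀ • e ∈ convexHull ℝ (range b)) :
    ∃ t : ℝ, ∃ j ≠ i, q + t • e ∈ convexHull ℝ (b '' {k | k ≠ j}) := by
  wlog he' : 0 ≤ (b.coord i).linear e generalizing e t₀
  -- the line is unchanged by `e ↦ -e`
  · obtain ⟨t, j, hj, ht⟩ := this (neg_ne_zero.2 he) (t₀ := -t₀) (by simpa using ht₀)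
      (by rw [map_neg]; linarith)
    exact ⟨-t, j, hj, by simpa using ht⟩
  set S := {t : ℝ | q + t • e ∈ convexHull ℝ (range b)}
  have hS : IsCompact S :=
    isCompact_setOf_add_smul_mem ((finite_range b).isCompact_convexHull (𝕜 := ℝ)) q he
  have hmax : sSup S ∈ S := hS.sSup_mem ⟨t₀, ht₀⟩
  by_contra! hface
  have hnonneg : ∀ k, 0 ≤ b.coord k (q + sSup S • e) := by
    simpa [S, b.convexHull_eq_nonneg_coord] using hmax
  have hpos : ∀ j ≠ i, 0 < b.coord j (q + sSup S • e) := fun j hj =>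
    (hnonneg j).lt_of_ne' fun h0 =>
      hface _ j hj (b.mem_convexHull_image_ne_of_coord_eq_zero hmax h0)
  obtain ⟨u, hmem, hu⟩ :=
    ((b.eventually_add_smul_mem_convexHull hmax hpos he').and self_mem_nhdsWithin).exists
  have : sSup S + u ∈ S := by simpa [S, add_smul, add_assoc] using hmem
  linarith [le_csSup hS.bddAbove this, show (0 : ℝ) < u from hu]

end AffineBasis

theorem stmt_8_general {ι : Type*} (Ω : Set (EuclideanSpace ℝ (Fin 3)))
    (hΩc : Convex ℝ Ω)
    (p d : ι → EuclideanSpace ℝ (Fin 3)) (hd : ∀ i, d i ≠ 0)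
    (C : Set (EuclideanSpace ℝ (Fin 3)))
    (hC : C = ⋃ i, {x | ∃ t : ℝ, x = p i + t • d i})
    (v : Fin 4 → EuclideanSpace ℝ (Fin 3)) (hv : AffineIndependent ℝ v)
    (T : Set (EuclideanSpace ℝ (Fin 3))) (hT : T = convexHull ℝ (Set.range v))
    (F : Fin 4 → Set (EuclideanSpace ℝ (Fin 3)))
    (hF : ∀ i, F i = convexHull ℝ (v '' {j | j ≠ i}))
    (hsub : interior T ∪ F 1 ∪ F 2 ∪ F 3 ⊆ Ω \ C) :
    T ⊆ Ω \ C := by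
  have hface : ∀ j ≠ 0, F j ⊆ Ω \ C := fun j hj => by
    refine subset_trans ?_ hsub
    fin_cases j
    exacts [absurd rfl hj, fun x h => .inl (.inl (.inr h)), fun x h => .inl (.inr h),
      fun x h => .inr h]
  have hvertex : range v ⊆ Ω := by
    rintro _ ⟨j, rfl⟩
    obtain ⟨k, hk0, hkj⟩ : ∃ k : Fin 4, k ≠ 0 ∧ k ≠ j := by
      by_cases hj : j = 1
      exacts [⟨2, by decide, by simp [hj]⟩, ⟨1, by decide, Ne.symm hj⟩]
    exact (hface k hk0 (hF k ▸ subset_convexHull ℝ _ ⟨j, hkj.symm, rfl⟩)).1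
  let b : AffineBasis (Fin 4) ℝ (EuclideanSpace ℝ (Fin 3)) :=
    ⟨v, hv, hv.affineSpan_eq_top_iff_card_eq_finrank_add_one.2 (by simp)⟩
  intro x hx
  refine ⟨convexHull_min hvertex hΩc (hT ▸ hx), fun hxC => ?_⟩
  obtain ⟨i, t₀, rfl⟩ : ∃ i, ∃ t₀ : ℝ, x = p i + t₀ • d i := by simpa [hC] using hxC
  obtain ⟨t, j, hj, ht⟩ :=
    b.exists_add_smul_mem_convexHull_image_ne 0 (p i) (hd i) (t₀ := t₀) (hT ▸ hx)
  exact (hface j hj (hF j ▸ ht)).2 (hC ▸ mem_iUnion.2 ⟨i, t, rfl⟩)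

/-- Let `Ω ⊆ ℝ³` be an open convex domain, `C` a closed union of complete
affine lines, and `Ω' = Ω \ C`. If a tetrahedron `T` has its interior and the
faces `F₂, F₃, F₄` contained in `Ω'`, then `T ⊆ Ω'`. -/
theorem stmt_8 {ι : Type*} (Ω : Set (EuclideanSpace ℝ (Fin 3)))
    (hΩo : IsOpen Ω) (hΩc : Convex ℝ Ω)
    (p d : ι → EuclideanSpace ℝ (Fin 3)) (hd : ∀ i, d i ≠ 0)
    (C : Set (EuclideanSpace ℝ (Fin 3)))
    (hC : C = ⋃ i, {x | ∃ t : ℝ, x = p i + t • d i})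
    (hCclosed : IsClosed C)
    (v : Fin 4 → EuclideanSpace ℝ (Fin 3)) (hv : AffineIndependent ℝ v)
    (T : Set (EuclideanSpace ℝ (Fin 3))) (hT : T = convexHull ℝ (Set.range v))
    (F : Fin 4 → Set (EuclideanSpace ℝ (Fin 3)))
    (hF : ∀ i, F i = convexHull ℝ (v '' {j | j ≠ i}))
    (hsub : interior T ∪ F 1 ∪ F 2 ∪ F 3 ⊆ Ω \ C) :
    T ⊆ Ω \ C :=
  stmt_8_general Ω hΩc p d hd C hC v hv T hT F hF hsub
end

section
/- Let T be a 3-simplex in ℝ³ that is contained in the open unit ball B = {x : ‖x‖ < 1}, and let ℓ be a chord of B, i.e., a closed segment whose two endpoints lie on the unit sphere ∂B. If ℓ meets T, then ℓ is not contained in the relative interior of any single 2-dimensional face of T; moreover if ℓ ∩ T is contained in a face F of T then ℓ ∩ T is not contained in the relative interior F° of F. -/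
/-! If `ℓ ∩ T` lay in the relative interior of the face opposite the vertex `v i`, then near each
of its points `T` agrees with the half-space where the barycentric coordinate `coord i` is
nonnegative, while `coord i` vanishes on `ℓ ∩ T`. Leaving `ℓ ∩ T` along `ℓ` towards an endpoint,
which lies outside `T`, therefore forces `coord i < 0` at that endpoint. Both endpoints then have
negative coordinate, hence so does all of `ℓ`, contradicting `coord i = 0` on `ℓ ∩ T`. -/

open Metric Set Filter Topology AffineMap

section

variable {E : Type*} [AddCommGroup E] [Module ℝ E] [TopologicalSpace E]
  [IsTopologicalAddGroup E] [ContinuousSMul ℝ E]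

theorem lt_zero_of_forall_mem_segment_inter {K : Set E} (hK : IsClosed K) (g : E →ᵃ[ℝ] ℝ)
    {p q : E} (hq : q ∉ K) (hmeet : (segment ℝ p q ∩ K).Nonempty)
    (hface : ∀ y ∈ segment ℝ p q ∩ K, g y = 0 ∧ ∀ᶠ x in 𝓝 y, 0 ≤ g x → x ∈ K) :
    g q < 0 := by
  set S := Icc (0 : ℝ) 1 ∩ lineMap p q ⁻¹' K
  have hS : IsCompact S := isCompact_Icc.inter_right (hK.preimage lineMap_continuous)
  have hSne : S.Nonempty := by
    obtain ⟨y, hy, hyK⟩ := hmeet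
    rw [segment_eq_image_lineMap] at hy
    obtain ⟨t, ht, rfl⟩ := hy
    exact ⟨t, ht, hyK⟩
  obtain ⟨t₀, ⟨ht₀, ht₀K⟩, ht₀max⟩ := hS.exists_isGreatest hSne
  have ht₀1 : t₀ < 1 := ht₀.2.lt_of_ne (by rintro rfl; exact hq (by simpa using ht₀K))
  set y₀ := lineMap p q t₀
  have hy₀ : y₀ ∈ segment ℝ p q := by
    rw [segment_eq_image_lineMap]; exact mem_image_of_mem _ ht₀
  obtain ⟨hgy₀, hy₀K⟩ := hface y₀ ⟨hy₀, ht₀K⟩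
  by_contra! hgq
  have hto : Tendsto (lineMap y₀ q) (𝓝[>] (0 : ℝ)) (𝓝 y₀) :=
    (lineMap_continuous.tendsto' 0 y₀ (lineMap_apply_zero _ _)).mono_left nhdsWithin_le_nhds
  have hsmall : ∀ᶠ s : ℝ in 𝓝[>] 0, s < 1 :=
    nhdsWithin_le_nhds (Iio_mem_nhds one_pos)
  obtain ⟨s, hsK, hs1, hs0 : 0 < s⟩ :=
    ((hto.eventually hy₀K).and (hsmall.and self_mem_nhdsWithin)).exists
  have hgs : g (lineMap y₀ q s) = s * g q := by
    rw [apply_lineMap, hgy₀, lineMap_apply_ring]; ring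
  have hpush : lineMap p q (lineMap t₀ 1 s) = lineMap y₀ q s := by
    rw [apply_lineMap, lineMap_apply_one]
  have hmem : lineMap t₀ (1 : ℝ) s ∈ S := by
    refine ⟨⟨?_, ?_⟩, ?_⟩
    · rw [lineMap_apply_ring]; nlinarith [ht₀.1, hs0]
    · rw [lineMap_apply_ring]; nlinarith [hs0]
    · rw [mem_preimage, hpush]
      exact hsK (by rw [hgs]; exact mul_nonneg hs0.le hgq)
  have := ht₀max hmem
  rw [lineMap_apply_ring] at this
  nlinarith [hs0]

end

theorem eventually_mem_of_mem_intrinsicInterior {E : Type*} [AddCommGroup E] [Module ℝ E]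
    [TopologicalSpace E] {s : Set E} {y : E} (hy : y ∈ intrinsicInterior ℝ s) :
    ∀ᶠ z in 𝓝 y, z ∈ affineSpan ℝ s → z ∈ s := by
  obtain ⟨y', hy', rfl⟩ := mem_intrinsicInterior.mp hy
  obtain ⟨u, hu, hus⟩ := (mem_nhds_subtype _ _ _).mp (mem_interior_iff_mem_nhds.mp hy')
  filter_upwards [hu] with z hz hzs
  exact hus (show (⟨z, hzs⟩ : affineSpan ℝ s) ∈ Subtype.val ⁻¹' u from hz)

namespace AffineBasis

theorem mem_affineSpan_image_compl_of_coord_eq_zero {E : Type*} [AddCommGroup E] [Module ℝ E]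
    {n : ℕ} [NeZero n] (b : AffineBasis (Fin (n + 1)) ℝ E) {i : Fin (n + 1)} {x : E}
    (hx : b.coord i x = 0) :
    x ∈ affineSpan ℝ (b '' {i}ᶜ) := by
  let s : Affine.Simplex ℝ E n := ⟨b, b.ind⟩
  rw [← s.range_faceOpposite_points, ← b.affineCombination_coord_eq_self x]
  exact (Affine.Simplex.affineCombination_mem_affineSpan_faceOpposite_iff
    (b.sum_coord_apply_eq_one x)).mpr hx

theorem coord_eq_zero_of_mem_convexHull_image_compl {E ι : Type*} [AddCommGroup E] [Module ℝ E]
    (b : AffineBasis ι ℝ E) {i : ι} {x : E} (hx : x ∈ convexHull ℝ (b '' {i}ᶜ)) :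
    b.coord i x = 0 := by
  refine convexHull_min ?_ ((convex_singleton 0).affine_preimage (b.coord i)) hx
  rintro _ ⟨j, hj, rfl⟩
  exact b.coord_apply_ne (Ne.symm hj)

theorem eventually_mem_convexHull_of_mem_intrinsicInterior {E : Type*} [NormedAddCommGroup E]
    [NormedSpace ℝ E] [FiniteDimensional ℝ E] {n : ℕ} [NeZero n]
    (b : AffineBasis (Fin (n + 1)) ℝ E) {i : Fin (n + 1)} {y : E}
    (hy : y ∈ intrinsicInterior ℝ (convexHull ℝ (b '' {i}ᶜ))) :
    ∀ᶠ x in 𝓝 y, 0 ≤ b.coord i x → x ∈ convexHull ℝ (range b) := by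
  have hc : Continuous (b.coord i) := (b.coord i).continuous_of_finiteDimensional
  have hy0 : b.coord i y = 0 :=
    b.coord_eq_zero_of_mem_convexHull_image_compl (intrinsicInterior_subset hy)
  -- central projection from the vertex `b i` onto the plane of the opposite face
  let φ : E → E := fun x => lineMap (b i) x (1 - b.coord i x)⁻¹
  have hφ : ContinuousAt φ y :=
    continuousAt_const.lineMap continuousAt_id
      ((continuousAt_const.sub hc.continuousAt).inv₀ (by simp [hy0]))
  have hφy : φ y = y := by simp [φ, hy0]
  have hφF := hφ.eventually (hφy ▸ eventually_mem_of_mem_intrinsicInterior hy)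
  have hlt : ∀ᶠ x in 𝓝 y, b.coord i x < 1 :=
    hc.continuousAt.eventually (Iio_mem_nhds (by simp [hy0]))
  filter_upwards [hφF, hlt] with x hxF hx1 hx0
  have hne : 1 - b.coord i x ≠ 0 := by linarith
  have hφ0 : b.coord i (φ x) = 0 := by
    simp only [φ, apply_lineMap, coord_apply_eq, lineMap_apply_ring]
    field_simp
    ring
  have hφmem : φ x ∈ convexHull ℝ (b '' {i}ᶜ) :=
    hxF (affineSpan_convexHull (𝕜 := ℝ) (b '' {i}ᶜ) ▸
      b.mem_affineSpan_image_compl_of_coord_eq_zero hφ0)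
  have hx : lineMap (b i) (φ x) (1 - b.coord i x) = x := by
    rw [lineMap_lineMap_right, mul_inv_cancel₀ hne, lineMap_apply_one]
  rw [← hx]
  exact (convex_convexHull ℝ _).lineMap_mem (subset_convexHull ℝ _ (mem_range_self i))
    (convexHull_mono (image_subset_range _ _) hφmem) ⟨by linarith, by linarith⟩

end AffineBasis

/-- Let `T` be a 3-simplex contained in the open unit ball of `ℝ³` and let
`ℓ` be a chord of the ball (a segment whose endpoints lie on the unit sphere)
meeting `T`.  Then `ℓ` is not contained in the relative interior of any
2-dimensional face of `T`; moreover if `ℓ ∩ T` lies in a face `F` of `T`,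
then `ℓ ∩ T` is not contained in the relative interior `F°`. -/
theorem stmt_15 (v : Fin 4 → EuclideanSpace ℝ (Fin 3))
    (hv : AffineIndependent ℝ v)
    (T : Set (EuclideanSpace ℝ (Fin 3))) (hT : T = convexHull ℝ (Set.range v))
    (hTball : T ⊆ ball (0 : EuclideanSpace ℝ (Fin 3)) 1)
    (p q : EuclideanSpace ℝ (Fin 3)) (hp : ‖p‖ = 1) (hq : ‖q‖ = 1)
    (ℓ : Set (EuclideanSpace ℝ (Fin 3))) (hℓ : ℓ = segment ℝ p q)
    (F : Fin 4 → Set (EuclideanSpace ℝ (Fin 3)))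
    (hF : ∀ i, F i = convexHull ℝ (v '' {j | j ≠ i}))
    (hmeet : (ℓ ∩ T).Nonempty) :
    (∀ i : Fin 4, ¬ ℓ ⊆ intrinsicInterior ℝ (F i)) ∧
      (∀ i : Fin 4, ℓ ∩ T ⊆ F i → ¬ ℓ ∩ T ⊆ intrinsicInterior ℝ (F i)) := by
  subst hℓ hT
  have hsphere : ∀ x, ‖x‖ = 1 → x ∉ convexHull ℝ (range v) := fun x hx hxT => by
    simpa [hx] using hTball hxT
  have hFT : ∀ i, F i ⊆ convexHull ℝ (range v) := fun i =>
    hF i ▸ convexHull_mono (image_subset_range _ _)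
  refine ⟨fun i hsub => hsphere p hp (hFT i (intrinsicInterior_subset
    (hsub (left_mem_segment ℝ p q)))), fun i _ hsub => ?_⟩
  let b : AffineBasis (Fin 4) ℝ (EuclideanSpace ℝ (Fin 3)) :=
    ⟨v, hv, hv.affineSpan_eq_top_iff_card_eq_finrank_add_one.mpr
      (by rw [Fintype.card_fin, finrank_euclideanSpace_fin])⟩
  have hface : ∀ y ∈ segment ℝ p q ∩ convexHull ℝ (range v),
      b.coord i y = 0 ∧ ∀ᶠ x in 𝓝 y, 0 ≤ b.coord i x → x ∈ convexHull ℝ (range v) := by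
    intro y hy
    have hyF : y ∈ intrinsicInterior ℝ (convexHull ℝ (b '' {i}ᶜ)) := hF i ▸ hsub hy
    exact ⟨b.coord_eq_zero_of_mem_convexHull_image_compl (intrinsicInterior_subset hyF),
      b.eventually_mem_convexHull_of_mem_intrinsicInterior hyF⟩
  have hclosed : IsClosed (convexHull ℝ (range v)) :=
    ((finite_range v).isCompact_convexHull ℝ).isClosed
  have hq0 := lt_zero_of_forall_mem_segment_inter hclosed (b.coord i) (hsphere q hq) hmeet hface
  have hp0 := lt_zero_of_forall_mem_segment_inter hclosed (b.coord i) (hsphere p hp)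
    (segment_symm ℝ p q ▸ hmeet) (segment_symm ℝ p q ▸ hface)
  obtain ⟨y, hy⟩ := hmeet
  have hneg : segment ℝ p q ⊆ {x | b.coord i x < 0} :=
    ((convex_Iio 0).affine_preimage (b.coord i)).segment_subset hp0 hq0
  exact (hneg hy.1).ne (hface y hy).1
end
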